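/- Let w(x,y) be a bivariate weight with biorthogonal polynomials p_i, q_j and constants h_i². Fix distinct points x₁,…,x_I ∈ ℂ and define w̃(x,y) = (∏_{i=1}^I (x−x_i)) w(x,y). Assume the determinant D = det(p_{n+j-1}(x_i))_{i,j=1}^I (columns indexed by degrees n,…,n+I−1) is nonzero. Then the function A_n(x) = (∏_{i=1}^I (x−x_i))^{-1} · det M / D, where M is the (I+1)×(I+1) matrix with rows (p_n(x_k),…,p_{n+I}(x_k)) for k=1,…,I and last row (p_n(x),…,p_{n+I}(x)), is a monic polynomial of degree n satisfying ∬ A_n(x) q(y) w̃(x,y) dx dy = 0 for every polynomial q of degree at most n−1. -/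

import Mathlib

/-!
The numerator `det M` is a polynomial in `x`: cofactor expansion along its last row writes it
as a combination of `p_n, …, p_{n+I}` in which `p_{n+I}` has coefficient `D`, so it has degree
`n + I` and leading coefficient `D`. It vanishes at every node `x_k` (two equal rows), hence is
divisible by `∏ (x - x_k)`, and the quotient divided by `D` is monic of degree `n`. Multiplying by
`∏ (x - x_k)` turns its pairing with `q` against `w̃` into the pairing of `det M / D` with `q`
against `w`, which vanishes because every `p_{n+j}` is biorthogonal to `q_0, …, q_{n-1}`, and
these span the polynomials of degree `< n`.
-/

open MeasureTheory Polynomial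

theorem Polynomial.Sequence.map_eq_zero_of_degree_lt {R M : Type*} [Ring R] [AddCommGroup M]
    [Module R M] (S : Polynomial.Sequence R) {n : ℕ} (hS : ∀ i < n, IsUnit (S i).leadingCoeff)
    (L : R[X] →ₗ[R] M) (hL : ∀ i < n, L (S i) = 0) {Q : R[X]} (hQ : Q.degree < n) :
    L Q = 0 := by
  have hQspan : Q ∈ Submodule.span R (S '' Set.Iio n) := by
    rw [S.span_degreeLT hS]
    exact mem_degreeLT.mpr hQ
  refine LinearMap.mem_ker.mp (Submodule.span_le.mpr ?_ hQspan)
  rintro _ ⟨i, hi, rfl⟩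
  exact hL i hi

section ChristoffelDet

variable {R : Type*} [CommRing R] {I : ℕ}

/-- The numerator `det M` of the Christoffel formula, as a polynomial in the variable of its last
row. -/
noncomputable def christoffelDet (xs : Fin I → R) (f : Fin (I + 1) → R[X]) : R[X] :=
  (Matrix.of fun i j : Fin (I + 1) =>
    if h : (i : ℕ) < I then C ((f j).eval (xs ⟨i, h⟩)) else f j).det

variable (xs : Fin I → R) (f : Fin (I + 1) → R[X])

theorem eval_christoffelDet (x : R) :
    (christoffelDet xs f).eval x = (Matrix.of fun i j : Fin (I + 1) =>
      if h : (i : ℕ) < I then (f j).eval (xs ⟨i, h⟩) else (f j).eval x).det := by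
  rw [christoffelDet, ← coe_evalRingHom, RingHom.map_det]
  congr 1
  ext i j
  by_cases h : (i : ℕ) < I <;> simp [h]

theorem christoffelDet_isRoot (k : Fin I) : (christoffelDet xs f).IsRoot (xs k) := by
  rw [IsRoot, eval_christoffelDet]
  refine Matrix.det_zero_of_row_eq (i := k.castSucc) (j := Fin.last I)
    (Fin.castSucc_lt_last k).ne (funext fun j => ?_)
  simp

theorem christoffelDet_eq_sum : christoffelDet xs f = ∑ j : Fin (I + 1),
    ((-1) ^ (I + (j : ℕ)) *
      (Matrix.of fun a b : Fin I => (f (j.succAbove b)).eval (xs a)).det) • f j := by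
  rw [christoffelDet, Matrix.det_succ_row _ (Fin.last I)]
  refine Finset.sum_congr rfl fun j _ => ?_
  have hminor : (Matrix.of fun i j : Fin (I + 1) =>
      if h : (i : ℕ) < I then C ((f j).eval (xs ⟨i, h⟩)) else f j).submatrix
        (Fin.last I).succAbove j.succAbove =
      C.mapMatrix (Matrix.of fun a b : Fin I => (f (j.succAbove b)).eval (xs a)) := by
    ext a b
    simp [Fin.succAbove_last]
  rw [hminor, smul_eq_C_mul, map_mul, RingHom.map_det]
  simp only [Fin.val_last, Matrix.of_apply, lt_irrefl, dite_false, map_pow, map_neg, map_one]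
  ring

theorem christoffelDet_mem_span : christoffelDet xs f ∈ Submodule.span R (Set.range f) := by
  rw [christoffelDet_eq_sum]
  exact Submodule.sum_mem _ fun j _ => Submodule.smul_mem _ _ (Submodule.subset_span ⟨j, rfl⟩)

theorem natDegree_christoffelDet_le
    (hlt : ∀ j : Fin I, (f j.castSucc).natDegree < (f (Fin.last I)).natDegree) :
    (christoffelDet xs f).natDegree ≤ (f (Fin.last I)).natDegree := by
  rw [christoffelDet_eq_sum]
  refine natDegree_sum_le_of_forall_le _ _ fun j _ => (natDegree_smul_le _ _).trans ?_
  induction j using Fin.lastCases with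
  | last => exact le_rfl
  | cast j => exact (hlt j).le

theorem coeff_christoffelDet (hmon : (f (Fin.last I)).Monic)
    (hlt : ∀ j : Fin I, (f j.castSucc).natDegree < (f (Fin.last I)).natDegree) :
    (christoffelDet xs f).coeff (f (Fin.last I)).natDegree =
      (Matrix.of fun a b : Fin I => (f b.castSucc).eval (xs a)).det := by
  rw [christoffelDet_eq_sum, finsetSum_coeff, Fin.sum_univ_castSucc]
  simp [coeff_eq_zero_of_natDegree_lt (hlt _), hmon.coeff_natDegree, Fin.succAbove_last]

end ChristoffelDet

theorem exists_monic_christoffelDet_eq {K : Type*} [Field K] {I : ℕ} {xs : Fin I → K}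
    (hxs : Function.Injective xs) {f : Fin (I + 1) → K[X]} (hmon : (f (Fin.last I)).Monic)
    (hlt : ∀ j : Fin I, (f j.castSucc).natDegree < (f (Fin.last I)).natDegree)
    (hD : (Matrix.of fun a b : Fin I => (f b.castSucc).eval (xs a)).det ≠ 0) :
    ∃ A : K[X], A.Monic ∧ A.natDegree + I = (f (Fin.last I)).natDegree ∧
      christoffelDet xs f = C (Matrix.of fun a b : Fin I => (f b.castSucc).eval (xs a)).det *
        ((∏ i, (X - C (xs i))) * A) := by
  set D := (Matrix.of fun a b : Fin I => (f b.castSucc).eval (xs a)).det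
  have hcoeff := coeff_christoffelDet xs f hmon hlt
  have hdeg : (christoffelDet xs f).natDegree = (f (Fin.last I)).natDegree :=
    (natDegree_christoffelDet_le xs f hlt).antisymm (le_natDegree_of_ne_zero (hcoeff ▸ hD))
  have hlead : (christoffelDet xs f).leadingCoeff = D := by rw [leadingCoeff, hdeg, hcoeff]
  have hPr : (∏ i, (X - C (xs i))).Monic := monic_prod_X_sub_C xs _
  obtain ⟨B, hB⟩ : ∏ i, (X - C (xs i)) ∣ christoffelDet xs f :=
    Finset.prod_dvd_of_coprime ((pairwise_coprime_X_sub_C hxs).set_pairwise _)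
      fun k _ => dvd_iff_isRoot.mpr (christoffelDet_isRoot xs f k)
  have hB0 : B ≠ 0 := by
    rintro rfl
    rw [mul_zero] at hB
    exact hD (by rw [← hlead, hB, leadingCoeff_zero])
  have hBlead : B.leadingCoeff = D := by
    rw [← hlead, hB, leadingCoeff_mul, hPr.leadingCoeff, one_mul]
  refine ⟨C D⁻¹ * B, ?_, ?_, ?_⟩
  · rw [Monic, leadingCoeff_mul, leadingCoeff_C, hBlead, inv_mul_cancel₀ hD]
  · rw [natDegree_C_mul (inv_ne_zero hD), ← hdeg, hB, natDegree_mul hPr.ne_zero hB0,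
      natDegree_prod_of_monic _ _ fun i _ => monic_X_sub_C (xs i)]
    simp [add_comm]
  · have hCD : C D * C D⁻¹ = 1 := by rw [← C_mul, mul_inv_cancel₀ hD, C_1]
    rw [hB]
    linear_combination (-((∏ i, (X - C (xs i))) * B)) * hCD

section WeightPairing

variable (ω : ℝ → ℝ → ℝ)
  (hint : ∀ P Q : ℝ[X], Integrable (fun z : ℝ × ℝ => P.eval z.1 * Q.eval z.2 * ω z.1 z.2))

noncomputable def weightPairing : ℝ[X] →ₗ[ℝ] ℝ[X] →ₗ[ℝ] ℝ :=
  LinearMap.mk₂ ℝ (fun P Q => ∫ z : ℝ × ℝ, P.eval z.1 * Q.eval z.2 * ω z.1 z.2)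
    (fun P₁ P₂ Q => by
      simp only [eval_add, add_mul]
      exact integral_add (hint P₁ Q) (hint P₂ Q))
    (fun c P Q => by
      simp only [eval_smul, smul_eq_mul, mul_assoc]
      exact integral_const_mul c _)
    (fun P Q₁ Q₂ => by
      simp only [eval_add, mul_add, add_mul]
      exact integral_add (hint P Q₁) (hint P Q₂))
    (fun c P Q => by
      simp only [eval_smul, smul_eq_mul, mul_left_comm _ c, mul_assoc]
      exact integral_const_mul c _)

theorem weightPairing_apply (P Q : ℝ[X]) :
    weightPairing ω hint P Q = ∫ x : ℝ, ∫ y : ℝ, P.eval x * Q.eval y * ω x y := by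
  rw [Measure.volume_eq_prod] at hint
  rw [weightPairing, LinearMap.mk₂_apply, Measure.volume_eq_prod, integral_prod _ (hint P Q)]

variable {ω hint}

theorem weightPairing_eq_zero_of_degree_lt {p q : ℕ → ℝ[X]} (hqm : ∀ j, (q j).Monic)
    (hqd : ∀ j, (q j).natDegree = j)
    (hbi : ∀ i j, j < i → weightPairing ω hint (p i) (q j) = 0)
    {n m : ℕ} (hnm : n ≤ m) {Q : ℝ[X]} (hQ : Q.degree < n) :
    weightPairing ω hint (p m) Q = 0 :=
  let qs : Polynomial.Sequence ℝ :=
    ⟨q, fun j => by rw [degree_eq_natDegree (hqm j).ne_zero, hqd j]⟩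
  qs.map_eq_zero_of_degree_lt (fun j _ => by simp [qs, (hqm j).leadingCoeff])
    (weightPairing ω hint (p m)) (fun j hj => hbi m j (by omega)) hQ

theorem weightPairing_christoffelDet_eq_zero {p q : ℕ → ℝ[X]} (hqm : ∀ j, (q j).Monic)
    (hqd : ∀ j, (q j).natDegree = j)
    (hbi : ∀ i j, j < i → weightPairing ω hint (p i) (q j) = 0)
    {n I : ℕ} (xs : Fin I → ℝ) {Q : ℝ[X]} (hQ : Q.degree < n) :
    weightPairing ω hint (christoffelDet xs fun j => p (n + j)) Q = 0 :=
  LinearMap.eqOn_span (f := (weightPairing ω hint).flip Q) (g := 0)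
    (by
      rintro _ ⟨j, rfl⟩
      exact weightPairing_eq_zero_of_degree_lt hqm hqd hbi (Nat.le_add_right n j) hQ)
    (christoffelDet_mem_span xs _)

end WeightPairing

theorem stmt_6_general (ω : ℝ → ℝ → ℝ) (p q : ℕ → Polynomial ℝ) (hsq : ℕ → ℝ) (n I : ℕ)
    (hpm : ∀ i, (p i).Monic) (hpd : ∀ i, (p i).natDegree = i)
    (hqm : ∀ j, (q j).Monic) (hqd : ∀ j, (q j).natDegree = j)
    (hint : ∀ P Q : Polynomial ℝ,
      Integrable (fun z : ℝ × ℝ => P.eval z.1 * Q.eval z.2 * ω z.1 z.2))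
    (hbi : ∀ i j, (∫ x : ℝ, ∫ y : ℝ, (p i).eval x * (q j).eval y * ω x y)
      = if i = j then hsq i else 0)
    (xs : Fin I → ℝ) (hxs : Function.Injective xs)
    (D : ℝ) (hD : D = Matrix.det (Matrix.of fun i j : Fin I => (p (n + (j : ℕ))).eval (xs i)))
    (hD0 : D ≠ 0)
    (wt : ℝ → ℝ → ℝ) (hwt : ∀ x y, wt x y = (∏ i : Fin I, (x - xs i)) * ω x y) :
    ∃ A : Polynomial ℝ, A.Monic ∧ A.natDegree = n ∧
      (∀ x : ℝ, (∀ i, x ≠ xs i) →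
        A.eval x = (∏ i : Fin I, (x - xs i))⁻¹ *
          (Matrix.det (Matrix.of fun i j : Fin (I + 1) =>
            if h : (i : ℕ) < I then (p (n + (j : ℕ))).eval (xs ⟨i, h⟩)
            else (p (n + (j : ℕ))).eval x)) / D) ∧
      ∀ Q : Polynomial ℝ, Q.degree < n →
        (∫ x : ℝ, ∫ y : ℝ, A.eval x * Q.eval y * wt x y) = 0 := by
  set f : Fin (I + 1) → ℝ[X] := fun j => p (n + j)
  have hDf : (Matrix.of fun a b : Fin I => (f b.castSucc).eval (xs a)).det = D := hD.symm
  obtain ⟨A, hAm, hAdeg, hA⟩ := exists_monic_christoffelDet_eq (f := f) hxs (hpm _)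
    (fun j => by simp [f, hpd]) (hDf ▸ hD0)
  rw [hDf] at hA
  refine ⟨A, hAm, by simpa [f, hpd] using hAdeg, fun x hx => ?_, fun Q hQ => ?_⟩
  · have hprod : ∏ i, (x - xs i) ≠ 0 :=
      Finset.prod_ne_zero_iff.mpr fun i _ => sub_ne_zero.mpr (hx i)
    rw [← eval_christoffelDet xs f, hA]
    simp only [eval_mul, eval_C, eval_prod, eval_sub, eval_X]
    field_simp
  · have hPA : (∏ i, (X - C (xs i))) * A = D⁻¹ • christoffelDet xs f := by
      rw [hA, smul_eq_C_mul, ← mul_assoc, ← C_mul, inv_mul_cancel₀ hD0, C_1, one_mul]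
    calc (∫ x : ℝ, ∫ y : ℝ, A.eval x * Q.eval y * wt x y)
        = weightPairing ω hint ((∏ i, (X - C (xs i))) * A) Q := by
          simp only [weightPairing_apply, hwt, eval_mul, eval_prod, eval_sub, eval_X, eval_C]
          congr 1 with x
          congr 1 with y
          ring
      _ = D⁻¹ * weightPairing ω hint (christoffelDet xs f) Q := by
          rw [hPA, map_smul, LinearMap.smul_apply, smul_eq_mul]
      _ = 0 := by
          rw [weightPairing_christoffelDet_eq_zero hqm hqd
            (fun i j hji => by rw [weightPairing_apply, hbi, if_neg hji.ne']) xs hQ, mul_zero]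

/-- Christoffel-type formula (Proposition 1): the monic biorthogonal polynomial of degree `n`
for the modified weight `w̃(x,y) = ∏ᵢ (x−xᵢ) · w(x,y)`, given as a ratio of determinants. -/
theorem stmt_6 (ω : ℝ → ℝ → ℝ) (p q : ℕ → Polynomial ℝ) (hsq : ℕ → ℝ) (n I : ℕ)
    (hpm : ∀ i, (p i).Monic) (hpd : ∀ i, (p i).natDegree = i)
    (hqm : ∀ j, (q j).Monic) (hqd : ∀ j, (q j).natDegree = j)
    (hh : ∀ i, hsq i ≠ 0)
    (hint : ∀ P Q : Polynomial ℝ,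
      Integrable (fun z : ℝ × ℝ => P.eval z.1 * Q.eval z.2 * ω z.1 z.2))
    (hbi : ∀ i j, (∫ x : ℝ, ∫ y : ℝ, (p i).eval x * (q j).eval y * ω x y)
      = if i = j then hsq i else 0)
    (xs : Fin I → ℝ) (hxs : Function.Injective xs)
    (D : ℝ) (hD : D = Matrix.det (Matrix.of fun i j : Fin I => (p (n + (j : ℕ))).eval (xs i)))
    (hD0 : D ≠ 0)
    (wt : ℝ → ℝ → ℝ) (hwt : ∀ x y, wt x y = (∏ i : Fin I, (x - xs i)) * ω x y) :
    ∃ A : Polynomial ℝ, A.Monic ∧ A.natDegree = n ∧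
      (∀ x : ℝ, (∀ i, x ≠ xs i) →
        A.eval x = (∏ i : Fin I, (x - xs i))⁻¹ *
          (Matrix.det (Matrix.of fun i j : Fin (I + 1) =>
            if h : (i : ℕ) < I then (p (n + (j : ℕ))).eval (xs ⟨i, h⟩)
            else (p (n + (j : ℕ))).eval x)) / D) ∧
      ∀ Q : Polynomial ℝ, Q.degree < n →
        (∫ x : ℝ, ∫ y : ℝ, A.eval x * Q.eval y * wt x y) = 0 :=
  stmt_6_general ω p q hsq n I hpm hpd hqm hqd hint hbi xs hxs D hD hD0 wt hwt
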